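/- arXiv:2405.15648 — 3 statements merged into one kernel-verified Lean document; each statement's English description precedes it below -/
import Mathlib

section
/- For every integer n ≥ 1 and every function f : G × G → ℂ, one has S (S f) = f; i.e. gauging the ℤ_n×ℤ_n symmetry twice is the identity manipulation on torus partition functions, so S is a duality operation. -/
/-!
Torus partition functions of (1+1)d theories with ℤ_n×ℤ_n symmetry,
modeled as functions `GG n × GG n → ℂ` where `GG n := ZMod n × ZMod n`
records the holonomies of each ℤ_n background gauge field around the
two cycles of the torus.
-/

noncomputable section

/-- The holonomy group of one ℤ_n background gauge field on the torus. -/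
abbrev GG (n : ℕ) := ZMod n × ZMod n

/-- The intersection pairing `ε a b = a₁ b₂ - a₂ b₁`. -/
def epsPair {n : ℕ} (a b : GG n) : ZMod n := a.1 * b.2 - a.2 * b.1

/-- The character `e x = exp(2πi x.val / n)`. -/
def eChar (n : ℕ) (x : ZMod n) : ℂ :=
  Complex.exp (2 * Real.pi * Complex.I * (x.val : ℂ) / n)

/-- The gauging operation `S` on torus partition functions. -/
def gaugeS (n : ℕ) [NeZero n] (f : GG n × GG n → ℂ) : GG n × GG n → ℂ :=
  fun P => (n : ℂ)⁻¹ * (n : ℂ)⁻¹ *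
    ∑ a : GG n, ∑ b : GG n, f (a, b) * eChar n (epsPair a P.2 + epsPair b P.1)

namespace GaugeAux

variable (n : ℕ) [NeZero n]

lemma hζ : (Complex.exp (2 * Real.pi * Complex.I / n)) ^ n = 1 := by
  rw [← Complex.exp_nat_mul]
  rw [mul_div_cancel₀ _ (by exact_mod_cast (NeZero.ne n) : (n : ℂ) ≠ 0)]
  exact Complex.exp_two_pi_mul_I

def ψ : AddChar (ZMod n) ℂ := AddChar.zmodChar n (hζ n)

lemma eChar_eq (x : ZMod n) : eChar n x = ψ n x := by
  rw [ψ, AddChar.zmodChar_apply, ← Complex.exp_nat_mul, eChar]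
  ring_nf

lemma eChar_add (x y : ZMod n) : eChar n (x + y) = eChar n x * eChar n y := by
  simp [eChar_eq, AddChar.map_add_eq_mul]

lemma sum_eChar_mul (c : ZMod n) :
    ∑ x : ZMod n, eChar n (x * c) = if c = 0 then (n : ℂ) else 0 := by
  have hprim : (ψ n).IsPrimitive :=
    AddChar.zmodChar_primitive_of_primitive_root n
      (Complex.isPrimitiveRoot_exp n (NeZero.ne n))
  have h1 : ∀ x : ZMod n, eChar n (x * c) = (AddChar.mulShift (ψ n) c) x := by
    intro x; rw [AddChar.mulShift_apply, mul_comm, eChar_eq]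
  simp_rw [h1]
  classical
  rw [AddChar.sum_eq_ite]
  by_cases hc : c = 0
  · simp [hc, AddChar.mulShift_zero, ZMod.card, show (0 : AddChar (ZMod n) ℂ) = 1 from rfl]
  · simp [hc, show (0 : AddChar (ZMod n) ℂ) = 1 from rfl, hprim hc]

lemma sum_eps (c : GG n) :
    ∑ a : GG n, eChar n (epsPair a c) = if c = 0 then (n : ℂ) * n else 0 := by
  rw [Fintype.sum_prod_type]
  have h1 : ∀ a1 a2 : ZMod n, epsPair (a1, a2) c = a1 * c.2 + a2 * (-c.1) := by
    intro a1 a2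
    show a1 * c.2 - a2 * c.1 = a1 * c.2 + a2 * (-c.1)
    ring
  simp_rw [h1, eChar_add, ← Finset.mul_sum, ← Finset.sum_mul]
  rw [sum_eChar_mul, sum_eChar_mul]
  rcases c with ⟨c1, c2⟩
  by_cases h1 : c1 = 0 <;> by_cases h2 : c2 = 0 <;>
    simp [h1, h2, Prod.ext_iff]

end GaugeAux

/-- gauging the ℤ_n×ℤ_n symmetry twice is the identity
manipulation on torus partition functions, so `S` is a duality operation. -/
theorem gaugeS_gaugeS (n : ℕ) [NeZero n] (f : GG n × GG n → ℂ) :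
    gaugeS n (gaugeS n f) = f := by
  classical
  have hn : (n : ℂ) ≠ 0 := by exact_mod_cast (NeZero.ne n)
  funext P
  obtain ⟨A, B⟩ := P
  have hS : ∀ (g : GG n × GG n → ℂ) (P : GG n × GG n),
      gaugeS n g P = (n : ℂ)⁻¹ * (n : ℂ)⁻¹ *
        ∑ p : GG n × GG n, g p * eChar n (epsPair p.1 P.2 + epsPair p.2 P.1) := by
    intro g P
    rw [gaugeS]
    congr 1
    exact (Fintype.sum_prod_type (fun p : GG n × GG n => g p * eChar n (epsPair p.1 P.2 + epsPair p.2 P.1))).symm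
  rw [hS (gaugeS n f)]
  simp only [hS f]
  have key : ∀ q p : GG n × GG n,
      f p * eChar n (epsPair p.1 q.2 + epsPair p.2 q.1) *
        eChar n (epsPair q.1 (A, B).2 + epsPair q.2 (A, B).1)
      = f p * (eChar n (epsPair q.1 (B - p.2)) * eChar n (epsPair q.2 (A - p.1))) := by
    intro q p
    rw [mul_assoc, ← GaugeAux.eChar_add, ← GaugeAux.eChar_add]
    congr 1
    simp only [epsPair, Prod.fst_sub, Prod.snd_sub]
    ring
  have step : ∑ q : GG n × GG n,
      ((n : ℂ)⁻¹ * (n : ℂ)⁻¹ *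
        ∑ p : GG n × GG n, f p * eChar n (epsPair p.1 q.2 + epsPair p.2 q.1)) *
        eChar n (epsPair q.1 (A, B).2 + epsPair q.2 (A, B).1)
      = (n : ℂ)⁻¹ * (n : ℂ)⁻¹ * ∑ p : GG n × GG n, f p *
          ((∑ q1 : GG n, eChar n (epsPair q1 (B - p.2))) *
           (∑ q2 : GG n, eChar n (epsPair q2 (A - p.1)))) := by
    simp_rw [mul_assoc ((n : ℂ)⁻¹ * (n : ℂ)⁻¹), ← Finset.mul_sum]
    congr 1
    simp_rw [Finset.sum_mul]
    rw [Finset.sum_comm]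
    refine Finset.sum_congr rfl fun p _ => ?_
    simp_rw [key]
    rw [← Finset.mul_sum]
    congr 1
    rw [Fintype.sum_prod_type (fun i : GG n × GG n =>
      eChar n (epsPair i.1 (B - p.2)) * eChar n (epsPair i.2 (A - p.1)))]
    simp_rw [← Finset.mul_sum]
  rw [step]
  simp_rw [GaugeAux.sum_eps]
  have hterm : ∀ p : GG n × GG n,
      f p * ((if B - p.2 = 0 then (n : ℂ) * n else 0) *
             (if A - p.1 = 0 then (n : ℂ) * n else 0))
      = if p = (A, B) then ((n : ℂ) * n) * ((n : ℂ) * n) * f p else 0 := by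
    intro p
    by_cases h1 : p.1 = A <;> by_cases h2 : p.2 = B
    · simp [h1, h2, Prod.ext_iff]
      ring
    · simp [Prod.ext_iff, h1, h2, sub_eq_zero, Ne.symm h2]
    · simp [Prod.ext_iff, h1, h2, sub_eq_zero, Ne.symm h1]
    · simp [Prod.ext_iff, h1, h2, sub_eq_zero, Ne.symm h1]
  simp_rw [hterm]
  rw [Finset.sum_ite_eq' Finset.univ (A, B)]
  simp only [Finset.mem_univ, if_true]
  field_simp

end
end

section
/- For every integer n ≥ 1 and every unit k of ZMod n, gauging the ℤ_n×ℤ_n symmetry sends the level-k SPT to the level-k⁻¹ SPT on the torus: S (Z k) = Z (k⁻¹). -/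
/-!
Torus partition functions of (1+1)d theories with ℤ_n×ℤ_n symmetry,
modeled as functions `GG n × GG n → ℂ` where `GG n := ZMod n × ZMod n`
records the holonomies of each ℤ_n background gauge field around the
two cycles of the torus.
-/

noncomputable section

/-- The SPT-stacking operation `T` on torus partition functions. -/
def stackT (n : ℕ) (f : GG n × GG n → ℂ) : GG n × GG n → ℂ :=
  fun P => f P * eChar n (epsPair P.1 P.2)

/-- The inverse SPT-stacking operation `T⁻¹` on torus partition functions. -/
def stackTinv (n : ℕ) (f : GG n × GG n → ℂ) : GG n × GG n → ℂ :=
  fun P => f P * eChar n (-(epsPair P.1 P.2))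

/-- The torus partition function of the level-`k` ℤ_n×ℤ_n SPT phase. -/
def Zspt (n : ℕ) (k : ZMod n) : GG n × GG n → ℂ :=
  fun P => eChar n (k * epsPair P.1 P.2)

/-!
Writing the SPT weight as `e (k * ε a b) = e (ε a (k • b))`, the sum over `a` is an orthogonality
sum for the characters `a ↦ e (ε a c)` of `G`. It collapses the sum over `b` onto the unique
solution `b = -(k⁻¹ • B)` of `k • b + B = 0`, leaving `e (ε (-(k⁻¹ • B)) A) = e (k⁻¹ * ε A B)`.
-/

section Characters

variable {n : ℕ} [NeZero n]

lemma eChar_eq_stdAddChar (x : ZMod n) : eChar n x = ZMod.stdAddChar x := by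
  rw [eChar, ZMod.stdAddChar_apply, ZMod.toCircle_apply]

lemma eChar_add (x y : ZMod n) : eChar n (x + y) = eChar n x * eChar n y := by
  simp only [eChar_eq_stdAddChar, AddChar.map_add_eq_mul]

lemma sum_eChar_mul (c : ZMod n) :
    ∑ x : ZMod n, eChar n (x * c) = if c = 0 then (n : ℂ) else 0 := by
  simp only [eChar_eq_stdAddChar]
  rw [AddChar.sum_mulShift c (ZMod.isPrimitive_stdAddChar n), ZMod.card]
  split_ifs <;> simp

lemma sum_eChar_epsPair (c : GG n) :
    ∑ a : GG n, eChar n (epsPair a c) = if c = 0 then (n : ℂ) * n else 0 := by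
  have hsplit (a : GG n) : eChar n (epsPair a c) = eChar n (a.1 * c.2) * eChar n (a.2 * -c.1) := by
    rw [← eChar_add, epsPair, mul_neg, sub_eq_add_neg]
  simp only [hsplit, Fintype.sum_prod_type, ← Finset.mul_sum, ← Finset.sum_mul, sum_eChar_mul,
    neg_eq_zero, Prod.ext_iff, Prod.fst_zero, Prod.snd_zero]
  split_ifs <;> simp_all

end Characters

lemma epsPair_smul_add {n : ℕ} (k : ZMod n) (a b B : GG n) :
    epsPair a (k • b + B) = k * epsPair a b + epsPair a B := by
  simp only [epsPair, Prod.fst_add, Prod.snd_add, Prod.smul_fst, Prod.smul_snd, smul_eq_mul]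
  ring

lemma smul_add_eq_zero_iff {n : ℕ} {k : ZMod n} (hk : IsUnit k) (b B : GG n) :
    k • b + B = 0 ↔ b = -(k⁻¹ • B) := by
  constructor
  · intro h
    rw [← smul_neg, ← eq_neg_of_add_eq_zero_left h, smul_smul, ZMod.inv_mul_of_unit k hk, one_smul]
  · rintro rfl
    rw [smul_neg, smul_smul, ZMod.mul_inv_of_unit k hk, one_smul, neg_add_cancel]

/-- for every unit `k` of `ZMod n`, gauging the ℤ_n×ℤ_n symmetry
sends the level-`k` SPT to the level-`k⁻¹` SPT on the torus. -/
theorem gaugeS_Zspt_unit (n : ℕ) [NeZero n] (k : ZMod n) (hk : IsUnit k) :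
    gaugeS n (Zspt n k) = Zspt n k⁻¹ := by
  funext ⟨A, B⟩
  have hn : (n : ℂ) ≠ 0 := Nat.cast_ne_zero.mpr (NeZero.ne n)
  calc gaugeS n (Zspt n k) (A, B)
      = (n : ℂ)⁻¹ * (n : ℂ)⁻¹ *
          ∑ b : GG n, eChar n (epsPair b A) * ∑ a : GG n, eChar n (epsPair a (k • b + B)) := by
        simp only [gaugeS, Zspt, epsPair_smul_add, eChar_add, Finset.mul_sum]
        rw [Finset.sum_comm]
        exact Finset.sum_congr rfl fun b _ ↦ Finset.sum_congr rfl fun a _ ↦ by ring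
    _ = (n : ℂ)⁻¹ * (n : ℂ)⁻¹ *
          ∑ b : GG n, if b = -(k⁻¹ • B) then eChar n (epsPair b A) * (n * n) else 0 := by
        simp only [sum_eChar_epsPair, smul_add_eq_zero_iff hk, mul_ite, mul_zero]
    _ = eChar n (epsPair (-(k⁻¹ • B)) A) := by
        rw [Finset.sum_ite_eq', if_pos (Finset.mem_univ _)]
        field_simp
    _ = Zspt n k⁻¹ (A, B) := by
        simp only [Zspt, epsPair, Prod.fst_neg, Prod.snd_neg, Prod.smul_fst, Prod.smul_snd,
          smul_eq_mul]
        congr 1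
        ring

end
end

section
/- Fix an even integer N ≥ 4 and let V := ∏_{j : Fin N} Matrix.exp ((π * Complex.I / 4) • (1 + (ε j : ℂ) • (Z j * Z (j + 1)))). Let j m : ℕ with j odd and j + 2*m + 1 < N, and let W := ∏_{i ∈ Finset.range (m+1)} X ((j + 2*i : ℕ) : Fin N) (the string of Pauli-x operators on the odd sites j, j+2, …, j+2m). Then V * W * V⁻¹ = Z ((j - 1 : ℕ) : Fin N) * W * Z ((j + 2*m + 1 : ℕ) : Fin N). Hence conjugation by the SPT entangler maps the trivial-phase string order parameter W_0^A(j, j+2m) to the SPT string order parameter W_SPT^A(j, j+2m). -/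
noncomputable section

open NormedSpace  -- for the exponential `exp 𝕂`
open Fin.NatCast

/-- Spin configurations of a periodic chain of `N` qubits. -/
abbrev Conf (N : ℕ) := Fin N → Fin 2

/-- The Pauli-z operator at site `j`: the diagonal matrix with
`(Z j) s s = (-1)^(s j)`. -/
def PZ (N : ℕ) (j : Fin N) : Matrix (Conf N) (Conf N) ℂ :=
  Matrix.diagonal (fun s => (-1 : ℂ) ^ ((s j : ℕ)))

/-- The Pauli-x operator at site `j`: `(X j) s t = 1` if `t` agrees with `s`
at every site other than `j` and `t j ≠ s j`, and `0` otherwise. -/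
def PX (N : ℕ) (j : Fin N) : Matrix (Conf N) (Conf N) ℂ :=
  fun s t => if (∀ i, i ≠ j → t i = s i) ∧ t j ≠ s j then 1 else 0

/-- The sign `ε j = (-1)^j`, well defined on `Fin N` for even `N`. -/
def epsSign (N : ℕ) (j : Fin N) : ℂ := (-1 : ℂ) ^ ((j : ℕ))

/-- The SPT entangler
`V = ∏_{j : Fin N} exp((πi/4) • (1 + ε j • (Z j * Z (j+1))))`.
All factors are pairwise commuting, so the product over `Fin N` is
unambiguous; we realize it as the ordered product of the list of factors. -/
def entangler (N : ℕ) [NeZero N] : Matrix (Conf N) (Conf N) ℂ :=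
  (List.ofFn (fun j : Fin N =>
    exp (((Real.pi : ℂ) * Complex.I / 4) •
      ((1 : Matrix (Conf N) (Conf N) ℂ) +
        epsSign N j • (PZ N j * PZ N (j + 1)))))).prod

/-- The string of Pauli-x operators on the odd sites `j, j+2, …, j+2m`
(the trivial-phase string order parameter `W_0^A(j, j+2m)`), realized as the
ordered product of the pairwise commuting Pauli-x factors. -/
def Wstring (N : ℕ) [NeZero N] (j m : ℕ) : Matrix (Conf N) (Conf N) ℂ :=
  ((List.range (m + 1)).map (fun i => PX N ((j + 2 * i : ℕ) : Fin N))).prod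

/-!
In the `σ^z` basis the entangler is diagonal: on a configuration with spins `z_k = ±1` it acts
by `∏_k ω(ε_k z_k z_{k+1})`, where `ω(x) = exp(iπ(1 + x)/4)`, so `ω(1) = i` and `ω(-1) = 1`.
Flipping the spin at `p` only changes the bonds `p - 1` and `p`, and because `ε_p = -ε_{p-1}`
(this is where `N` even enters) their joint phase gets multiplied by `z_{p-1} z_{p+1}`. Hence
`V X_p = Z_{p-1} X_p Z_{p+1} V`; along the string of `X`'s on every other site the inner `Z`'s
meet in pairs and cancel, leaving the two outside the interval.
-/

open Matrix Complex

variable {N : ℕ}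

lemma Fintype.prod_eq_mul_prod_of_eq_off_pair {ι M : Type*} [Fintype ι] [DecidableEq ι]
    [CommMonoid M] {f g : ι → M} {a b : ι} (hab : a ≠ b) (c : M)
    (hpair : g a * g b = c * (f a * f b)) (hoff : ∀ i, i ≠ a → i ≠ b → g i = f i) :
    ∏ i, g i = c * ∏ i, f i := by
  have hcompl : ∏ i ∈ {a, b}ᶜ, g i = ∏ i ∈ {a, b}ᶜ, f i :=
    Finset.prod_congr rfl fun i hi => by
      simp only [Finset.mem_compl, Finset.mem_insert, Finset.mem_singleton, not_or] at hi
      exact hoff i hi.1 hi.2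
  rw [← Finset.prod_mul_prod_compl {a, b}, ← Finset.prod_mul_prod_compl {a, b} f,
    Finset.prod_pair hab, Finset.prod_pair hab, hpair, hcompl, mul_assoc]

lemma Fin.one_ne_zero_of_even [NeZero N] (hN : Even N) : (1 : Fin N) ≠ 0 := by
  obtain ⟨r, hr⟩ := hN
  have := NeZero.ne N
  rw [Ne, Fin.ext_iff, Fin.val_one', Fin.val_zero, Nat.mod_eq_of_lt (by omega)]
  exact Nat.one_ne_zero

def Conf.flip (p : Fin N) (s : Conf N) : Conf N := Function.update s p (s p + 1)

lemma Conf.flip_flip (p : Fin N) (s : Conf N) : (s.flip p).flip p = s := by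
  ext i
  by_cases hi : i = p
  · subst hi
    simp only [Conf.flip, Function.update_self]
    omega
  · simp [Conf.flip, Function.update_of_ne hi]

lemma PX_apply (p : Fin N) (s t : Conf N) : PX N p s t = if t = s.flip p then 1 else 0 := by
  have hbit : ∀ a b : Fin 2, b ≠ a ↔ b = a + 1 := by decide
  simp only [PX, Conf.flip, Function.eq_update_iff, hbit, and_comm]

lemma diagonal_mul_PX (p : Fin N) (d : Conf N → ℂ) :
    diagonal d * PX N p = PX N p * diagonal (fun s => d (s.flip p)) := by
  ext s t
  simp only [mul_diagonal, diagonal_mul, PX_apply]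
  split_ifs with h
  · rw [h, Conf.flip_flip]; ring
  · simp

def spin (s : Conf N) (k : Fin N) : ℂ := (-1) ^ (s k : ℕ)

lemma PZ_eq_diagonal_spin (k : Fin N) : PZ N k = diagonal (spin · k) := rfl

lemma spin_mul_self (s : Conf N) (k : Fin N) : spin s k * spin s k = 1 := by
  rw [spin, ← pow_add, ← two_mul, pow_mul, neg_one_sq, one_pow]

lemma spin_flip_self (s : Conf N) (p : Fin N) : spin (s.flip p) p = -spin s p := by
  have hbit : ∀ a : Fin 2, (-1 : ℂ) ^ ((a + 1 : Fin 2) : ℕ) = -(-1) ^ (a : ℕ) := by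
    intro a; fin_cases a <;> norm_num
  rw [spin, spin, Conf.flip, Function.update_self, hbit]

lemma spin_flip_of_ne (s : Conf N) {k p : Fin N} (h : k ≠ p) :
    spin (s.flip p) k = spin s k := by
  rw [spin, spin, Conf.flip, Function.update_of_ne h]

lemma PZ_mul_self (k : Fin N) : PZ N k * PZ N k = 1 := by
  rw [PZ_eq_diagonal_spin, diagonal_mul_diagonal]
  simp only [spin_mul_self, diagonal_one]

lemma PZ_mul_PX_of_ne {k p : Fin N} (h : k ≠ p) : PZ N k * PX N p = PX N p * PZ N k := by
  simp only [PZ_eq_diagonal_spin, diagonal_mul_PX, spin_flip_of_ne _ h]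

lemma epsSign_mul_self (k : Fin N) : epsSign N k * epsSign N k = 1 := by
  rw [epsSign, ← pow_add, ← two_mul, pow_mul, neg_one_sq, one_pow]

lemma epsSign_add_one [NeZero N] (hN : Even N) (k : Fin N) :
    epsSign N (k + 1) = -epsSign N k := by
  have hparity : ((k + 1 : Fin N) : ℕ) % 2 = ((k : ℕ) + 1) % 2 := by
    rw [Fin.val_add, Fin.val_one', Nat.mod_mod_of_dvd _ hN.two_dvd, Nat.add_mod,
      Nat.mod_mod_of_dvd _ hN.two_dvd, ← Nat.add_mod]
  rw [epsSign, epsSign, neg_one_pow_eq_pow_mod_two, hparity, ← neg_one_pow_eq_pow_mod_two,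
    pow_succ, mul_neg_one]

def bondPhase (x : ℂ) : ℂ := Complex.exp (Real.pi * I / 4 * (1 + x))

lemma bondPhase_one : bondPhase 1 = I := by
  have harg : (Real.pi : ℂ) * I / 4 * (1 + 1) = (Real.pi / 2 : ℝ) * I := by push_cast; ring
  rw [bondPhase, harg, Complex.exp_mul_I, ← Complex.ofReal_cos, ← Complex.ofReal_sin,
    Real.cos_pi_div_two, Real.sin_pi_div_two]
  simp

lemma bondPhase_neg_one : bondPhase (-1) = 1 := by
  simp [bondPhase]

lemma bondPhase_neg_mul_bondPhase {u v : ℂ} (hu : u * u = 1) (hv : v * v = 1) :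
    bondPhase (-u) * bondPhase v = u * v * (bondPhase u * bondPhase (-v)) := by
  rcases mul_self_eq_one_iff.mp hu with rfl | rfl <;>
    rcases mul_self_eq_one_iff.mp hv with rfl | rfl <;>
    simp [bondPhase_one, bondPhase_neg_one]

lemma bondPhase_flip_pair {ε a b c : ℂ} (hε : ε * ε = 1) (ha : a * a = 1) (hb : b * b = 1)
    (hc : c * c = 1) :
    bondPhase (ε * (a * -b)) * bondPhase (-ε * (-b * c)) =
      a * c * (bondPhase (ε * (a * b)) * bondPhase (-ε * (b * c))) := by
  have hu : ε * (a * b) * (ε * (a * b)) = 1 := by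
    linear_combination (a * a * (b * b)) * hε + b * b * ha + hb
  have hv : ε * (b * c) * (ε * (b * c)) = 1 := by
    linear_combination (b * b * (c * c)) * hε + c * c * hb + hc
  have huv : ε * (a * b) * (ε * (b * c)) = a * c := by
    linear_combination (a * c * (b * b)) * hε + a * c * hb
  rw [show ε * (a * -b) = -(ε * (a * b)) by ring, show -ε * (-b * c) = ε * (b * c) by ring,
    show -ε * (b * c) = -(ε * (b * c)) by ring, bondPhase_neg_mul_bondPhase hu hv, huv]

def entanglerDiag [NeZero N] (s : Conf N) : ℂ :=
  ∏ k : Fin N, bondPhase (epsSign N k * (spin s k * spin s (k + 1)))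

lemma exp_bond_eq_diagonal [NeZero N] (k : Fin N) :
    exp (((Real.pi : ℂ) * I / 4) •
      ((1 : Matrix (Conf N) (Conf N) ℂ) + epsSign N k • (PZ N k * PZ N (k + 1)))) =
      diagonal fun s => bondPhase (epsSign N k * (spin s k * spin s (k + 1))) := by
  rw [PZ_eq_diagonal_spin, PZ_eq_diagonal_spin, diagonal_mul_diagonal, ← diagonal_smul,
    ← diagonal_one, diagonal_add, ← diagonal_smul, exp_diagonal, Pi.exp_def]
  simp only [Pi.smul_apply, smul_eq_mul, ← Complex.exp_eq_exp_ℂ, bondPhase]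

lemma entangler_eq_diagonal [NeZero N] : entangler N = diagonal entanglerDiag := by
  have hdiag : entanglerDiag = ∏ k : Fin N,
      fun s : Conf N => bondPhase (epsSign N k * (spin s k * spin s (k + 1))) := by
    ext s
    rw [Finset.prod_apply, entanglerDiag]
  simp only [entangler, exp_bond_eq_diagonal, ← diagonalRingHom_apply, hdiag, ← List.prod_ofFn,
    map_list_prod, List.map_ofFn]
  rfl

lemma entanglerDiag_flip [NeZero N] (hN : Even N) (p : Fin N) (s : Conf N) :
    entanglerDiag (s.flip p) = spin s (p - 1) * spin s (p + 1) * entanglerDiag s := by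
  have h10 := Fin.one_ne_zero_of_even hN
  have hp1 : p - 1 ≠ p := mt sub_eq_self.mp h10
  have hp2 : p + 1 ≠ p := add_ne_left.mpr h10
  have hε : epsSign N p = -epsSign N (p - 1) := by rw [← epsSign_add_one hN, sub_add_cancel]
  apply Fintype.prod_eq_mul_prod_of_eq_off_pair hp1
  · simp only [sub_add_cancel, spin_flip_self, spin_flip_of_ne s hp1, spin_flip_of_ne s hp2, hε]
    exact bondPhase_flip_pair (epsSign_mul_self _) (spin_mul_self _ _) (spin_mul_self _ _)
      (spin_mul_self _ _)
  · intro k hk1 hk2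
    have hk3 : k + 1 ≠ p := fun h => hk1 (eq_sub_of_add_eq h)
    rw [spin_flip_of_ne s hk2, spin_flip_of_ne s hk3]

lemma entangler_mul_PX [NeZero N] (hN : Even N) (p : Fin N) :
    entangler N * PX N p = PZ N (p - 1) * PX N p * PZ N (p + 1) * entangler N := by
  have hp1 : p - 1 ≠ p := mt sub_eq_self.mp (Fin.one_ne_zero_of_even hN)
  rw [PZ_mul_PX_of_ne hp1, entangler_eq_diagonal, diagonal_mul_PX, PZ_eq_diagonal_spin,
    PZ_eq_diagonal_spin, mul_assoc, mul_assoc, diagonal_mul_diagonal, diagonal_mul_diagonal]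
  simp only [entanglerDiag_flip hN, mul_assoc]

lemma entangler_mul_Wstring [NeZero N] (hN : Even N) {j : ℕ} (hj : 1 ≤ j) (m : ℕ) :
    entangler N * Wstring N j m =
      PZ N ((j - 1 : ℕ) : Fin N) * Wstring N j m * PZ N ((j + 2 * m + 1 : ℕ) : Fin N) *
        entangler N := by
  induction m with
  | zero =>
    have hW : Wstring N j 0 = PX N (j : Fin N) := by simp [Wstring]
    have hleft : ((j - 1 : ℕ) : Fin N) = (j : Fin N) - 1 :=
      eq_sub_of_add_eq <| (Nat.cast_succ _).symm.trans (congrArg _ (Nat.sub_add_cancel hj))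
    rw [hW, entangler_mul_PX hN, hleft, ← Nat.cast_succ]
  | succ m ih =>
    set q : ℕ := j + 2 * (m + 1)
    have hW : Wstring N j (m + 1) = Wstring N j m * PX N (q : Fin N) := by
      rw [Wstring, Wstring, List.range_succ, List.map_append, List.prod_append]
      simp [q]
    have hleft : (q : Fin N) - 1 = ((j + 2 * m + 1 : ℕ) : Fin N) :=
      sub_eq_of_eq_add (Nat.cast_succ _)
    rw [hW, ← mul_assoc, ih, mul_assoc _ (entangler N), entangler_mul_PX hN, hleft,
      ← Nat.cast_succ]
    simp only [mul_assoc]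
    rw [← mul_assoc (PZ N _) (PZ N _), PZ_mul_self, one_mul]

lemma entangler_mul_inv [NeZero N] : entangler N * (entangler N)⁻¹ = 1 := by
  refine mul_nonsing_inv _ ((isUnit_iff_isUnit_det _).mp ?_)
  rw [entangler_eq_diagonal, isUnit_diagonal, Pi.isUnit_iff]
  exact fun s => isUnit_iff_ne_zero.mpr <|
    Finset.prod_ne_zero_iff.mpr fun k _ => Complex.exp_ne_zero _

theorem entangler_string_order_general (N : ℕ) [NeZero N] (hNeven : Even N)
    (j m : ℕ) (hj : Odd j) :
    entangler N * Wstring N j m * (entangler N)⁻¹ =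
      PZ N ((j - 1 : ℕ) : Fin N) * Wstring N j m * PZ N ((j + 2 * m + 1 : ℕ) : Fin N) := by
  rw [entangler_mul_Wstring hNeven hj.pos m, mul_assoc, entangler_mul_inv, mul_one]

/-- for even `N ≥ 4`, odd `j` and `j + 2m + 1 < N`, conjugation
by the SPT entangler maps the trivial-phase string order parameter
`W = W_0^A(j, j+2m)` to the SPT string order parameter
`W_SPT^A(j, j+2m) = Z (j-1) * W * Z (j+2m+1)`. -/
theorem entangler_string_order (N : ℕ) [NeZero N] (hN : 4 ≤ N) (hNeven : Even N)
    (j m : ℕ) (hj : Odd j) (hjm : j + 2 * m + 1 < N) :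
    entangler N * Wstring N j m * (entangler N)⁻¹ =
      PZ N ((j - 1 : ℕ) : Fin N) * Wstring N j m * PZ N ((j + 2 * m + 1 : ℕ) : Fin N) :=
  entangler_string_order_general N hNeven j m hj

end
end
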